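/- arXiv:1212.6878 — 2 statements merged into one kernel-verified Lean document; each statement's English description precedes it below -/
import Mathlib

section
/- Let W₁ be a k-dimensional complex vector space and (a₁,a₂,b,c) a nondegenerate ADHM datum. Then the stabilizer of (a₁,a₂,b,c) in GL(W₁) is trivial: if g ∈ GL(W₁) satisfies g a₁ g⁻¹ = a₁, g a₂ g⁻¹ = a₂, g b = b, c g⁻¹ = c, then g = 1. -/
/-!
The fixed subspace of `g` contains `Im b` and, since `g` commutes with `a₁` and `a₂`, is invariant
under them; by nondegeneracy it is all of `W`.
-/

open Module

/-- Nondegeneracy of an ADHM datum `(a₁,a₂,b,c)`. -/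
def ADHMNondeg {V W : Type*} [AddCommGroup V] [Module ℂ V] [AddCommGroup W] [Module ℂ W]
    (a₁ a₂ : W →ₗ[ℂ] W) (b : V →ₗ[ℂ] W) (c : W →ₗ[ℂ] V) : Prop :=
  (∀ U : Submodule ℂ W, LinearMap.range b ≤ U → Submodule.map a₁ U ≤ U →
      Submodule.map a₂ U ≤ U → U = ⊤) ∧
  (∀ U : Submodule ℂ W, U ≤ LinearMap.ker c → Submodule.map a₁ U ≤ U →
      Submodule.map a₂ U ≤ U → U = ⊥)

section Fixed

variable {R M N : Type*} [Semiring R] [AddCommMonoid M] [Module R M] [AddCommMonoid N]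
  [Module R N]

theorem LinearEquiv.comp_eq_comp_of_conj_eq {e : M ≃ₗ[R] M} {a : M →ₗ[R] M}
    (h : (e : M →ₗ[R] M) ∘ₗ a ∘ₗ (e.symm : M →ₗ[R] M) = a) :
    (e : M →ₗ[R] M) ∘ₗ a = a ∘ₗ (e : M →ₗ[R] M) := by
  ext x
  simpa using LinearMap.congr_fun h (e x)

theorem LinearMap.map_eqLocus_id_le {f a : M →ₗ[R] M} (h : f ∘ₗ a = a ∘ₗ f) :
    Submodule.map a (eqLocus f id) ≤ eqLocus f id := by
  rintro _ ⟨x, hx : f x = x, rfl⟩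
  change f (a x) = a x
  rw [← LinearMap.comp_apply, h, LinearMap.comp_apply, hx]

theorem LinearMap.range_le_eqLocus_of_comp_eq {f g : M →ₗ[R] M} {b : N →ₗ[R] M}
    (h : f ∘ₗ b = g ∘ₗ b) : range b ≤ eqLocus f g := by
  rintro _ ⟨v, rfl⟩
  exact LinearMap.congr_fun h v

end Fixed

theorem ADHMNondeg.eq_id_of_comp_eq {V W : Type*} [AddCommGroup V] [Module ℂ V] [AddCommGroup W]
    [Module ℂ W] {a₁ a₂ : W →ₗ[ℂ] W} {b : V →ₗ[ℂ] W} {c : W →ₗ[ℂ] V}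
    (hnd : ADHMNondeg a₁ a₂ b c) {f : W →ₗ[ℂ] W} (h₁ : f ∘ₗ a₁ = a₁ ∘ₗ f)
    (h₂ : f ∘ₗ a₂ = a₂ ∘ₗ f) (hb : f ∘ₗ b = b) : f = LinearMap.id :=
  LinearMap.eqLocus_eq_top.1 <| hnd.1 _ (LinearMap.range_le_eqLocus_of_comp_eq hb)
    (LinearMap.map_eqLocus_id_le h₁) (LinearMap.map_eqLocus_id_le h₂)

theorem adhm_stabilizer_trivial_general
    {V W : Type*} [AddCommGroup V] [Module ℂ V] [AddCommGroup W] [Module ℂ W]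
    (a₁ a₂ : W →ₗ[ℂ] W) (b : V →ₗ[ℂ] W) (c : W →ₗ[ℂ] V)
    (hnd : ADHMNondeg a₁ a₂ b c)
    (g : W ≃ₗ[ℂ] W)
    (hg₁ : (g : W →ₗ[ℂ] W) ∘ₗ a₁ ∘ₗ (g.symm : W →ₗ[ℂ] W) = a₁)
    (hg₂ : (g : W →ₗ[ℂ] W) ∘ₗ a₂ ∘ₗ (g.symm : W →ₗ[ℂ] W) = a₂)
    (hgb : (g : W →ₗ[ℂ] W) ∘ₗ b = b) :
    g = LinearEquiv.refl ℂ W := by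
  have hg : (g : W →ₗ[ℂ] W) = LinearMap.id :=
    hnd.eq_id_of_comp_eq (LinearEquiv.comp_eq_comp_of_conj_eq hg₁)
      (LinearEquiv.comp_eq_comp_of_conj_eq hg₂) hgb
  ext x
  exact LinearMap.congr_fun hg x

/-- The stabilizer of a nondegenerate ADHM datum in `GL(W₁)` is trivial: if
`g a₁ g⁻¹ = a₁`, `g a₂ g⁻¹ = a₂`, `g b = b` and `c g⁻¹ = c` then `g = 1`. -/
theorem adhm_stabilizer_trivial
    {V W : Type*} [AddCommGroup V] [Module ℂ V] [AddCommGroup W] [Module ℂ W]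
    (a₁ a₂ : W →ₗ[ℂ] W) (b : V →ₗ[ℂ] W) (c : W →ₗ[ℂ] V)
    (hint : a₁ ∘ₗ a₂ - a₂ ∘ₗ a₁ + b ∘ₗ c = 0)
    (hnd : ADHMNondeg a₁ a₂ b c)
    (g : W ≃ₗ[ℂ] W)
    (hg₁ : (g : W →ₗ[ℂ] W) ∘ₗ a₁ ∘ₗ (g.symm : W →ₗ[ℂ] W) = a₁)
    (hg₂ : (g : W →ₗ[ℂ] W) ∘ₗ a₂ ∘ₗ (g.symm : W →ₗ[ℂ] W) = a₂)
    (hgb : (g : W →ₗ[ℂ] W) ∘ₗ b = b)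
    (hgc : c ∘ₗ (g.symm : W →ₗ[ℂ] W) = c) :
    g = LinearEquiv.refl ℂ W :=
  adhm_stabilizer_trivial_general a₁ a₂ b c hnd g hg₁ hg₂ hgb
end

section
/- Composition of the 'boxplus' block matrices respects the integrability condition: given ADHM data (a₁',a₂',b',c') and (a₁'',a₂'',b'',c'') for rank-1 spaces W' = W'' = ℂ (so a's are scalars) with b'c' = 0 = b''c'' and scalars x₁,x₂,y₁,y₂ with a₁' + x₁ ≠ a₁'' + y₁, the 2×2 block datum A₁ = diag(a₁'+x₁, a₁''+y₁), A₂ = [[a₂'+x₂, b'c''/(a₁''+y₁-a₁'-x₁)],[b''c'/(a₁'+x₁-a₁''-y₁), a₂''+y₂]], B = (b';b''), C = (c', c'') satisfies the integrability condition [A₁,A₂] + BC = 0. -/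
/-! Commuting a matrix `M` with a diagonal matrix `diag d` multiplies its entry `(i, j)` by
`d i - d j`, while `B ∘ C` is the matrix `(b_i (c_j 1))`. The off-diagonal entries of `A₂` are
divided by exactly the differences `d j - d i`, so they cancel `b' c''` and `b'' c'`, and the
diagonal entries `b' c'`, `b'' c''` vanish by hypothesis. -/

open Matrix

theorem Matrix.diagonal_mul_sub_mul_diagonal {ι R : Type*} [Fintype ι] [DecidableEq ι]
    [CommRing R] (d : ι → R) (M : Matrix ι ι R) :
    diagonal d * M - M * diagonal d = of fun i j ↦ (d i - d j) * M i j := by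
  ext i j
  simp only [sub_apply, diagonal_mul, mul_diagonal, of_apply]
  ring

theorem LinearMap.pi_comp_sum_comp_proj_eq_toLin' {ι R V : Type*} [Fintype ι] [DecidableEq ι]
    [CommRing R] [AddCommGroup V] [Module R V] (b : ι → V →ₗ[R] R) (c : ι → R →ₗ[R] V) :
    LinearMap.pi b ∘ₗ ∑ j, c j ∘ₗ LinearMap.proj j = toLin' (of fun i j ↦ b i (c j 1)) := by
  ext j i
  simp [Pi.single_apply, apply_ite]

theorem sub_mul_div_sub_rev {K : Type*} [Field K] {u v : K} (h : u ≠ v) (p : K) :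
    (u - v) * (p / (v - u)) = -p := by
  rw [← neg_sub v u, neg_mul, mul_div_cancel₀ p (sub_ne_zero.2 h.symm)]

/-- The `boxplus` block construction respects the integrability condition.  Given
rank-one ADHM data (`W' = W'' = ℂ`, so `a₁',a₂',a₁'',a₂''` are scalars) with
`b'c' = 0`, `b''c'' = 0`, and translation parameters `x₁,x₂,y₁,y₂` with
`a₁' + x₁ ≠ a₁'' + y₁`, the 2×2 block datum
`A₁ = diag(a₁'+x₁, a₁''+y₁)`,
`A₂ = [[a₂'+x₂, b'c''/(a₁''+y₁-a₁'-x₁)], [b''c'/(a₁'+x₁-a₁''-y₁), a₂''+y₂]]`,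
`B = (b'; b'')`, `C = (c', c'')` satisfies `[A₁,A₂] + BC = 0`. -/
theorem adhm_boxplus_integrability
    {V : Type*} [AddCommGroup V] [Module ℂ V]
    (a₁' a₂' a₁'' a₂'' x₁ x₂ y₁ y₂ : ℂ)
    (b' b'' : V →ₗ[ℂ] ℂ) (c' c'' : ℂ →ₗ[ℂ] V)
    (hb' : b' (c' 1) = 0) (hb'' : b'' (c'' 1) = 0)
    (hne : a₁' + x₁ ≠ a₁'' + y₁) :
    let A₁ : (Fin 2 → ℂ) →ₗ[ℂ] (Fin 2 → ℂ) :=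
      Matrix.toLin' !![a₁' + x₁, 0; 0, a₁'' + y₁]
    let A₂ : (Fin 2 → ℂ) →ₗ[ℂ] (Fin 2 → ℂ) :=
      Matrix.toLin' !![a₂' + x₂, b' (c'' 1) / (a₁'' + y₁ - a₁' - x₁);
                       b'' (c' 1) / (a₁' + x₁ - a₁'' - y₁), a₂'' + y₂]
    let B : V →ₗ[ℂ] (Fin 2 → ℂ) := LinearMap.pi ![b', b'']
    let C : (Fin 2 → ℂ) →ₗ[ℂ] V := c' ∘ₗ LinearMap.proj 0 + c'' ∘ₗ LinearMap.proj 1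
    A₁ ∘ₗ A₂ - A₂ ∘ₗ A₁ + B ∘ₗ C = 0 := by
  intro A₁ A₂ B C
  have hC : C = ∑ j, ![c', c''] j ∘ₗ LinearMap.proj j := by
    simp [C, Fin.sum_univ_two]
  rw [hC, LinearMap.pi_comp_sum_comp_proj_eq_toLin', ← toLin'_mul, ← toLin'_mul, ← map_sub,
    ← map_add, ← diagonal_vec2, diagonal_mul_sub_mul_diagonal, LinearEquiv.map_eq_zero_iff]
  have hne' : a₁'' + y₁ ≠ a₁' + x₁ := hne.symm
  ext i j
  fin_cases i <;> fin_cases j <;>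
    simp [sub_sub, sub_mul_div_sub_rev hne, sub_mul_div_sub_rev hne', hb', hb'']
end
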